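/- Let s ≥ 0 and t ≥ 2 be integers, and let H_1, …, H_{s+1} be finite simple graphs, none of which has K_t as a minor. Let G be the graph obtained from the disjoint union of H_1, …, H_{s+1} by adding one new vertex v adjacent to every other vertex. Then K_{t+1} is not a minor of G. -/

import Mathlib

/-!
Drop the branch set of a `K_{t+1}` model that contains the apex (any one, if none does).
The remaining `t` branch sets are connected and pairwise adjacent in the disjoint union of
the `H i`, so they all lie in a single `H i`, where they form a `K_t` model.
-/

/-- `G` has a `K_n` minor: there are `n` nonempty, pairwise disjoint branch sets,
each inducing a connected subgraph, with an edge of `G` between any two of them. -/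
def HasCompleteMinor {V : Type} (G : SimpleGraph V) (n : ℕ) : Prop :=
  ∃ f : Fin n → Set V,
    (∀ i, (f i).Nonempty) ∧
    (∀ i, (G.induce (f i)).Connected) ∧
    (Pairwise fun i j => Disjoint (f i) (f j)) ∧
    (∀ i j, i ≠ j → ∃ x ∈ f i, ∃ y ∈ f j, G.Adj x y)

/-- Every vertex of `X` has at most `s` neighbours (w.r.t. `G`) inside `X`;
equivalently the subgraph of `G` induced on `X` has maximum degree at most `s`. -/
def MaxDegWithinLE {V : Type} (G : SimpleGraph V) (X : Set V) (s : ℕ) : Prop :=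
  ∀ v ∈ X, ({u | u ∈ X ∧ G.Adj v u}).ncard ≤ s

namespace SimpleGraph

variable {V V' I : Type*} {G : SimpleGraph V} {G' : SimpleGraph V'}

theorem Reachable.apply_eq_of_forall_adj {c : V → I} (hc : ∀ u v, G.Adj u v → c u = c v)
    {u v : V} (h : G.Reachable u v) : c u = c v := by
  obtain ⟨p⟩ := h
  induction p with
  | nil => rfl
  | cons hadj _ ih => exact (hc _ _ hadj).trans ih

noncomputable def Embedding.induceImage (e : G' ↪g G) (T : Set V') :
    G'.induce T ≃g G.induce (e '' T) :=
  { Equiv.Set.image e T e.injective with map_rel_iff' := e.map_adj_iff }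

end SimpleGraph

open SimpleGraph

structure IsCompleteMinorModel {V : Type} (G : SimpleGraph V) {n : ℕ} (f : Fin n → Set V) :
    Prop where
  nonempty : ∀ i, (f i).Nonempty
  connected : ∀ i, (G.induce (f i)).Connected
  disjoint : Pairwise fun i j => Disjoint (f i) (f j)
  adj : ∀ i j, i ≠ j → ∃ x ∈ f i, ∃ y ∈ f j, G.Adj x y

theorem hasCompleteMinor_iff {V : Type} {G : SimpleGraph V} {n : ℕ} :
    HasCompleteMinor G n ↔ ∃ f : Fin n → Set V, IsCompleteMinorModel G f :=
  ⟨fun ⟨f, h₁, h₂, h₃, h₄⟩ => ⟨f, h₁, h₂, h₃, h₄⟩, fun ⟨f, h₁, h₂, h₃, h₄⟩ => ⟨f, h₁, h₂, h₃, h₄⟩⟩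

namespace IsCompleteMinorModel

variable {V V' I : Type} {G : SimpleGraph V} {G' : SimpleGraph V'} {n m : ℕ} {f : Fin n → Set V}

theorem comp (hf : IsCompleteMinorModel G f) {e : Fin m → Fin n} (he : Function.Injective e) :
    IsCompleteMinorModel G (f ∘ e) where
  nonempty i := hf.nonempty (e i)
  connected i := hf.connected (e i)
  disjoint _ _ hij := hf.disjoint (he.ne hij)
  adj i j hij := hf.adj (e i) (e j) (he.ne hij)

theorem exists_forall_notMem {f : Fin (n + 1) → Set V} (hf : IsCompleteMinorModel G f) (v : V) :
    ∃ g : Fin n → Set V, IsCompleteMinorModel G g ∧ ∀ k, v ∉ g k := by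
  obtain ⟨j, hj⟩ : ∃ j, ∀ k ≠ j, v ∉ f k := by
    by_cases h : ∃ j, v ∈ f j
    · obtain ⟨j, hj⟩ := h
      exact ⟨j, fun k hk hvk => Set.disjoint_left.mp (hf.disjoint hk) hvk hj⟩
    · exact ⟨0, fun k _ hvk => h ⟨k, hvk⟩⟩
  exact ⟨f ∘ j.succAbove, hf.comp Fin.succAbove_right_injective,
    fun k => hj _ (Fin.succAbove_ne j k)⟩

theorem preimage (hf : IsCompleteMinorModel G f) (e : G' ↪g G)
    (hsub : ∀ k, f k ⊆ Set.range e) : IsCompleteMinorModel G' fun k => e ⁻¹' f k where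
  nonempty k := by
    obtain ⟨x, hx⟩ := hf.nonempty k
    obtain ⟨y, rfl⟩ := hsub k hx
    exact ⟨y, hx⟩
  connected k := (e.induceImage _).connected_iff.mpr <| by
    rw [Set.image_preimage_eq_of_subset (hsub k)]
    exact hf.connected k
  disjoint _ _ hij := (hf.disjoint hij).preimage e
  adj i j hij := by
    obtain ⟨x, hx, y, hy, hxy⟩ := hf.adj i j hij
    obtain ⟨a, rfl⟩ := hsub i hx
    obtain ⟨b, rfl⟩ := hsub j hy
    exact ⟨a, hx, b, hy, e.map_adj_iff.mp hxy⟩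

/-- A model of a complete minor lies inside a single connected component. -/
theorem exists_forall_apply_eq [Nonempty I] (hf : IsCompleteMinorModel G f) {c : V → I}
    (hc : ∀ u v, G.Adj u v → c u = c v) : ∃ i, ∀ k, ∀ x ∈ f k, c x = i := by
  have within : ∀ k, ∀ x ∈ f k, ∀ y ∈ f k, c x = c y := fun k x hx y hy =>
    ((hf.connected k).preconnected ⟨x, hx⟩ ⟨y, hy⟩).apply_eq_of_forall_adj
      (c := c ∘ Subtype.val) fun _ _ huv => hc _ _ huv
  cases n with
  | zero => exact ⟨Classical.arbitrary I, fun k => k.elim0⟩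
  | succ n =>
    obtain ⟨x₀, hx₀⟩ := hf.nonempty 0
    refine ⟨c x₀, fun k x hx => ?_⟩
    obtain rfl | hk := eq_or_ne k 0
    · exact within _ x hx x₀ hx₀
    obtain ⟨y, hy, z, hz, hyz⟩ := hf.adj k 0 hk
    rw [within k x hx y hy, hc y z hyz, within 0 z hz x₀ hx₀]

end IsCompleteMinorModel

theorem apex_of_disjoint_union_no_minor_general (s t : ℕ)
    (W : Fin (s + 1) → Type)
    (H : ∀ i, SimpleGraph (W i)) (hH : ∀ i, ¬ HasCompleteMinor (H i) t)
    (G : SimpleGraph (Option (Σ i, W i)))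
    (hsame : ∀ (i : Fin (s + 1)) (x y : W i),
      G.Adj (some ⟨i, x⟩) (some ⟨i, y⟩) ↔ (H i).Adj x y)
    (hdiff : ∀ (i j : Fin (s + 1)) (x : W i) (y : W j), i ≠ j →
      ¬ G.Adj (some ⟨i, x⟩) (some ⟨j, y⟩)) :
    ¬ HasCompleteMinor G (t + 1) := by
  rw [hasCompleteMinor_iff]
  rintro ⟨f, hf⟩
  obtain ⟨g, hg, hnone⟩ := hf.exists_forall_notMem none
  have hg₀ := hg.preimage (Embedding.comap .some G) fun k v hv =>
    Option.ne_none_iff_exists.mp fun h => hnone k (h ▸ hv)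
  obtain ⟨i₀, hi₀⟩ := hg₀.exists_forall_apply_eq (c := Sigma.fst)
    fun ⟨i, x⟩ ⟨j, y⟩ hxy => by_contra fun hij => hdiff i j x y hij hxy
  let e : H i₀ ↪g G.comap Function.Embedding.some :=
    { toEmbedding := ⟨Sigma.mk i₀, sigma_mk_injective⟩, map_rel_iff' := hsame i₀ _ _ }
  refine hH i₀ (hasCompleteMinor_iff.mpr ⟨_, hg₀.preimage e ?_⟩)
  rintro k ⟨j, x⟩ hx
  obtain rfl := hi₀ k _ hx
  exact ⟨x, rfl⟩

/-- If none of the graphs `H 0, …, H s` has a `K_t` minor (`t ≥ 2`), and `G` is obtained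
from their disjoint union by adding a new vertex (here `none`) adjacent to every other
vertex, then `G` has no `K_{t+1}` minor. -/
theorem apex_of_disjoint_union_no_minor (s t : ℕ) (ht : 2 ≤ t)
    (W : Fin (s + 1) → Type) [∀ i, Fintype (W i)]
    (H : ∀ i, SimpleGraph (W i)) (hH : ∀ i, ¬ HasCompleteMinor (H i) t)
    (G : SimpleGraph (Option (Σ i, W i)))
    (hsame : ∀ (i : Fin (s + 1)) (x y : W i),
      G.Adj (some ⟨i, x⟩) (some ⟨i, y⟩) ↔ (H i).Adj x y)
    (hdiff : ∀ (i j : Fin (s + 1)) (x : W i) (y : W j), i ≠ j →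
      ¬ G.Adj (some ⟨i, x⟩) (some ⟨j, y⟩))
    (hnone : ∀ p : Σ i, W i, G.Adj none (some p)) :
    ¬ HasCompleteMinor G (t + 1) :=
  apex_of_disjoint_union_no_minor_general s t W H hH G hsame hdiff
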